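/- Let ε > 0 and let G be a simple graph on n vertices with m ≥ 1 edges, maximum degree Δ, and average degree d̄ = 2m/n. If the edge density satisfies 2m/n² ≤ ε/2 and Δ + 1 < (2−ε)·d̄, then BC_k(G) holds for every k with 1 ≤ k ≤ n. -/

import Mathlib

open Finset

namespace Brouwer

variable {V : Type*}

/-- The sum of the `k` largest values of `f` on a finite type, expressed as the
supremum over all `k`-element subsets of the sum of `f` over the subset. -/
noncomputable def sumKLargest [Fintype V] (f : V → ℝ) (k : ℕ) : ℝ :=
  sSup { x : ℝ | ∃ T : Finset V, T.card = k ∧ ∑ i ∈ T, f i = x }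

/-- The Laplacian matrix of a finite simple graph is Hermitian (real symmetric). -/
theorem lapMatrix_isHermitian [Fintype V] [DecidableEq V] (G : SimpleGraph V)
    [DecidableRel G.Adj] : (G.lapMatrix ℝ).IsHermitian := by
  rw [Matrix.IsHermitian, Matrix.conjTranspose_eq_transpose_of_trivial]
  exact G.isSymm_lapMatrix ℝ

/-- The adjacency matrix of a finite simple graph is Hermitian (real symmetric). -/
theorem adjMatrix_isHermitian [Fintype V] [DecidableEq V] (G : SimpleGraph V)
    [DecidableRel G.Adj] : (G.adjMatrix ℝ).IsHermitian := by
  rw [Matrix.IsHermitian, Matrix.conjTranspose_eq_transpose_of_trivial]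
  exact G.isSymm_adjMatrix

/-- The (multiset of) eigenvalues of the Laplacian matrix of `G`, indexed by vertices. -/
noncomputable def lapEig [Fintype V] [DecidableEq V] (G : SimpleGraph V) : V → ℝ := by
  classical exact (lapMatrix_isHermitian G).eigenvalues

/-- The (multiset of) eigenvalues of the adjacency matrix of `G`, indexed by vertices. -/
noncomputable def adjEig [Fintype V] [DecidableEq V] (G : SimpleGraph V) : V → ℝ := by
  classical exact (adjMatrix_isHermitian G).eigenvalues

/-- `sLap G k` is `s_k(G)`, the sum of the `k` largest Laplacian eigenvalues of `G`. -/
noncomputable def sLap [Fintype V] [DecidableEq V] (G : SimpleGraph V) (k : ℕ) : ℝ :=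
  sumKLargest (lapEig G) k

/-- The number of edges of `G`. -/
noncomputable def numEdges [Fintype V] (G : SimpleGraph V) : ℕ := by
  classical exact G.edgeFinset.card

/-- `BC G k`: Brouwer's conjectured inequality `s_k(G) ≤ m + (k+1 choose 2)`. -/
def BC [Fintype V] [DecidableEq V] (G : SimpleGraph V) (k : ℕ) : Prop :=
  sLap G k ≤ numEdges G + (k + 1).choose 2

/-- Number of edges of `G` with both endpoints in `S`. -/
noncomputable def edgesWithin [Fintype V] [DecidableEq V] (G : SimpleGraph V)
    (S : Finset V) : ℕ := by
  classical exact (G.edgeFinset.filter (fun e => ∀ v ∈ e, v ∈ S)).card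

/-- The adjacency spectral radius of `G`, i.e. the largest adjacency eigenvalue. -/
noncomputable def specRad [Fintype V] [DecidableEq V] (G : SimpleGraph V) : ℝ :=
  sumKLargest (adjEig G) 1

/-- The maximum subgraph spectral density `t(G)`:
the supremum of `ρ(G[S])/|S|` over nonempty vertex subsets `S`. -/
noncomputable def maxDensity [Fintype V] [DecidableEq V] (G : SimpleGraph V) : ℝ :=
  sSup { x : ℝ | ∃ S : Finset V, S.Nonempty ∧
    x = specRad (G.induce (↑S : Set V)) / (S.card : ℝ) }

/-- Edge-edit distance between two graphs on the same vertex set. -/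
noncomputable def editDistance [Fintype V] (G H : SimpleGraph V) : ℕ := by
  classical exact (symmDiff G.edgeFinset H.edgeFinset).card

/-- A split graph: the vertex set partitions into a clique and an independent set. -/
def IsSplit (G : SimpleGraph V) : Prop :=
  ∃ C : Set V, G.IsClique C ∧ Gᶜ.IsClique Cᶜ

/-- The splittance of `G`: the least number of edge edits needed to reach a split graph. -/
noncomputable def splittance [Fintype V] (G : SimpleGraph V) : ℕ :=
  sInf { d : ℕ | ∃ H : SimpleGraph V, IsSplit H ∧ editDistance G H = d }

/-- The join `G + K₁` of `G` with one new vertex adjacent to every vertex of `G`. -/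
def joinOne (G : SimpleGraph V) : SimpleGraph (Option V) where
  Adj x y := x ≠ y ∧ ∀ a, x = some a → ∀ b, y = some b → G.Adj a b
  symm := ⟨by
    rintro x y ⟨hxy, h⟩
    exact ⟨hxy.symm, fun a ha b hb => (h b hb a ha).symm⟩⟩
  loopless := ⟨by rintro x ⟨hxx, -⟩; exact hxx rfl⟩


/-!
By Cauchy–Schwarz, the sum of any `k` Laplacian eigenvalues is at most `√(k ∑ λᵢ²)`, and
`∑ λᵢ² = tr L² = ∑ᵥ (dᵥ² + dᵥ) ≤ 2m(Δ + 1)`. By AM–GM, `2mk(Δ + 1) ≤ (m + k²/2)²` for every `k`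
as soon as `27(Δ + 1)² ≤ 32m`. Writing `x = d̄/n`, the hypotheses give `Δ + 1 < 2d̄(1 - x)`, and
`27x(1 - x)² ≤ 4` turns this into `27(Δ + 1)² < 16d̄n = 32m`.
-/

open Matrix

theorem _root_.Matrix.IsHermitian.trace_mul_self {n 𝕜 : Type*} [Fintype n] [DecidableEq n]
    [RCLike 𝕜] {A : Matrix n n 𝕜} (hA : A.IsHermitian) :
    (A * A).trace = ∑ i, (hA.eigenvalues i : 𝕜) ^ 2 := by
  conv_lhs => rw [hA.spectral_theorem, ← map_mul, Unitary.conjStarAlgAut_apply, trace_mul_cycle,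
    Unitary.coe_star_mul_self, one_mul, diagonal_mul_diagonal, trace_diagonal]
  simp [sq]

theorem _root_.SimpleGraph.trace_lapMatrix_mul_self {R : Type*} [CommRing R] [Fintype V]
    [DecidableEq V] (G : SimpleGraph V) [DecidableRel G.Adj] :
    (G.lapMatrix R * G.lapMatrix R).trace = ∑ v, ((G.degree v : R) ^ 2 + G.degree v) := by
  rw [SimpleGraph.lapMatrix, SimpleGraph.degMatrix, sub_mul, mul_sub, mul_sub, trace_sub, trace_sub,
    trace_sub]
  simp only [trace, diag_apply, diagonal_mul_diagonal, diagonal_mul, mul_diagonal,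
    diagonal_apply_eq, SimpleGraph.adjMatrix_apply, G.irrefl, if_false, mul_zero, zero_mul,
    sum_const_zero, SimpleGraph.adjMatrix_mul_self_apply_self, sq, sum_add_distrib]
  ring

theorem sumKLargest_le_sqrt [Fintype V] (f : V → ℝ) (k : ℕ) :
    sumKLargest f k ≤ √(k * ∑ i, f i ^ 2) := by
  refine Real.sSup_le ?_ (Real.sqrt_nonneg _)
  rintro _ ⟨T, rfl, rfl⟩
  refine (le_abs_self _).trans (Real.abs_le_sqrt ?_)
  calc (∑ i ∈ T, f i) ^ 2 ≤ T.card * ∑ i ∈ T, f i ^ 2 := sq_sum_le_card_mul_sum_sq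
    _ ≤ T.card * ∑ i, f i ^ 2 := by
      gcongr
      exact subset_univ T

section Graph

variable [Fintype V] (G : SimpleGraph V) [DecidableRel G.Adj]

theorem sum_degree_eq_two_mul_numEdges : ∑ v, (G.degree v : ℝ) = 2 * numEdges G := by
  have hm : numEdges G = G.edgeFinset.card := by unfold numEdges; congr!
  rw [hm]
  exact_mod_cast G.sum_degrees_eq_twice_card_edges

variable [DecidableEq V]

theorem sum_lapEig_sq : ∑ i, lapEig G i ^ 2 = ∑ v, ((G.degree v : ℝ) ^ 2 + G.degree v) := by
  rw [← G.trace_lapMatrix_mul_self, (lapMatrix_isHermitian G).trace_mul_self]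
  simp only [RCLike.ofReal_real_eq_id, id]
  -- `lapEig` is built from the classical `DecidableRel G.Adj` instance
  unfold lapEig
  congr!

theorem sum_lapEig_sq_le : ∑ i, lapEig G i ^ 2 ≤ 2 * numEdges G * (G.maxDegree + 1) := by
  rw [sum_lapEig_sq, ← sum_degree_eq_two_mul_numEdges, sum_mul]
  gcongr with v
  have hv : (G.degree v : ℝ) ≤ G.maxDegree := by exact_mod_cast G.degree_le_maxDegree v
  nlinarith

theorem sLap_le_sqrt (k : ℕ) : sLap G k ≤ √(k * (2 * numEdges G * (G.maxDegree + 1))) :=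
  (sumKLargest_le_sqrt _ k).trans (Real.sqrt_le_sqrt (by gcongr; exact sum_lapEig_sq_le G))

end Graph

theorem four_mul_le_sq_add {a k D : ℝ} (ha : 0 ≤ a) (hk : 0 ≤ k) (hD : 0 ≤ D)
    (h : 27 * D ^ 2 ≤ 16 * a) : 4 * k * a * D ≤ (a + k ^ 2) ^ 2 := by
  have amgm : 256 * a ^ 3 * k ^ 2 ≤ 27 * (a + k ^ 2) ^ 4 := by
    nlinarith [mul_nonneg (sq_nonneg (3 * k ^ 2 - a))
      (show 0 ≤ 3 * k ^ 4 + 14 * k ^ 2 * a + 27 * a ^ 2 by positivity)]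
  refine (pow_le_pow_iff_left₀ (by positivity) (by positivity) two_ne_zero).1 ?_
  calc (4 * k * a * D) ^ 2 = 16 * k ^ 2 * a ^ 2 * D ^ 2 := by ring
    _ ≤ 16 * k ^ 2 * a ^ 2 * (16 * a / 27) := by gcongr; linarith
    _ ≤ ((a + k ^ 2) ^ 2) ^ 2 := by linarith

theorem bc_of_sq_le [Fintype V] [DecidableEq V] (G : SimpleGraph V) [DecidableRel G.Adj]
    (h : 27 * ((G.maxDegree : ℝ) + 1) ^ 2 ≤ 32 * numEdges G) (k : ℕ) : BC G k := by
  have hchoose : (((k + 1).choose 2 : ℕ) : ℝ) = (k + 1) * k / 2 := by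
    rw [Nat.cast_choose_two]; push_cast; ring
  have hsq := four_mul_le_sq_add (a := 2 * numEdges G) (k := k) (D := G.maxDegree + 1)
    (by positivity) (by positivity) (by positivity) (by linarith)
  refine (sLap_le_sqrt G k).trans (Real.sqrt_le_iff.2 ⟨by positivity, ?_⟩)
  rw [hchoose]
  calc (k : ℝ) * (2 * numEdges G * (G.maxDegree + 1)) ≤ (numEdges G + (k : ℝ) ^ 2 / 2) ^ 2 := by
        linarith
    _ ≤ (numEdges G + (k + 1) * k / 2) ^ 2 := by gcongr; linarith [(k.cast_nonneg : (0 : ℝ) ≤ k)]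

theorem sq_lt_of_lt_two_sub_mul {D m n ε : ℝ} (hD : 0 ≤ D) (hm : 0 ≤ m) (hn : 0 ≤ n)
    (hdens : 2 * m / n ^ 2 ≤ ε / 2) (hlt : D < (2 - ε) * (2 * m / n)) : 27 * D ^ 2 < 32 * m := by
  obtain hn | rfl := hn.lt_or_eq'
  · set x := 2 * m / n ^ 2 with hx
    have hd : 2 * m / n = x * n := by rw [hx]; field_simp
    have hm' : 32 * m = 16 * x * n ^ 2 := by rw [hx]; field_simp; ring
    rw [hd] at hlt
    rw [hm']
    have hxn : 0 ≤ x * n := by positivity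
    have hlt' : D < 2 * x * n * (1 - x) := by nlinarith
    have hx1 : x < 1 := by nlinarith
    have key : 27 * x * (1 - x) ^ 2 ≤ 4 := by
      nlinarith [mul_nonneg (sq_nonneg (1 - 3 * x)) (show 0 ≤ 4 - 3 * x by linarith)]
    calc 27 * D ^ 2 < 27 * (2 * x * n * (1 - x)) ^ 2 := by gcongr
      _ = 4 * x * n ^ 2 * (27 * x * (1 - x) ^ 2) := by ring
      _ ≤ 4 * x * n ^ 2 * 4 := by gcongr
      _ = 16 * x * n ^ 2 := by ring
  · simp only [div_zero, mul_zero] at hlt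
    linarith

theorem bc_of_low_density_degree_general {V : Type*} [Fintype V] [DecidableEq V] (G : SimpleGraph V)
    [DecidableRel G.Adj] (ε : ℝ) (n d : ℝ)
    (hn : n = (Fintype.card V : ℝ)) (hd : d = 2 * (numEdges G : ℝ) / n)
    (hdens : 2 * (numEdges G : ℝ) / n ^ 2 ≤ ε / 2)
    (hΔ : (G.maxDegree : ℝ) + 1 < (2 - ε) * d) :
    ∀ k : ℕ, 1 ≤ k → k ≤ Fintype.card V → BC G k := by
  subst hn hd
  intro k _ _
  exact bc_of_sq_le G
    (sq_lt_of_lt_two_sub_mul (by positivity) (by positivity) (by positivity) hdens hΔ).le k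

/-- if `ε > 0`, `m ≥ 1`, the edge density satisfies `2m/n² ≤ ε/2` and
`Δ + 1 < (2-ε)·d̄`, then `BC_k(G)` holds for every `1 ≤ k ≤ n`. -/
theorem bc_of_low_density_degree {V : Type*} [Fintype V] [DecidableEq V] (G : SimpleGraph V)
    [DecidableRel G.Adj] (ε : ℝ) (hε : 0 < ε) (hedge : 1 ≤ numEdges G) (n d : ℝ)
    (hn : n = (Fintype.card V : ℝ)) (hd : d = 2 * (numEdges G : ℝ) / n)
    (hdens : 2 * (numEdges G : ℝ) / n ^ 2 ≤ ε / 2)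
    (hΔ : (G.maxDegree : ℝ) + 1 < (2 - ε) * d) :
    ∀ k : ℕ, 1 ≤ k → k ≤ Fintype.card V → BC G k :=
  bc_of_low_density_degree_general G ε n d hn hd hdens hΔ

end Brouwer
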